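/- Let G be a temporal directed graph, S ⊆ V a set of entry vertices, DA ∈ V the target, [tα,tω] a time interval, and C ⊆ V \ (S ∪ {DA}) a temporal (S,DA)-cut within [tα,tω]; assume at least one temporal (s,DA)-path within [tα,tω] exists for some s ∈ S. Then the minimum of RT(π,C) over all temporal (s,DA)-paths π within [tα,tω] with s ∈ S equals the minimum, over all pairs (c,t) such that c ∈ C, tα ≤ t ≤ tω, and there exists a temporal path from some s ∈ S to c within [tα,tω] that arrives at c at time t and contains no vertex of C \ {c}, of the quantity ea_G(c,DA,[t,tω]) − t, where ea_G(c,DA,[t,tω]) is the earliest arrival time at DA over temporal (c,DA)-paths within [t,tω] in G (such suffix paths are allowed to pass through other vertices of C). (This establishes the correctness of Algorithm 1: the attacker's optimal attack path is found by minimizing, over first points of contact c and arrival times t, the earliest-arrival duration from c to DA.) -/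

import Mathlib

/-!
Splitting an attack path at its first contact `c` with `C` yields a prefix that meets `C` only
in `c`, arriving there at some time `t`, and a suffix from `c` to `DA` departing no earlier than
`t`; hence every response time is at least `ea(c, DA, [t, tω]) - t`.

Conversely, glue such a prefix to an earliest-arrival path from `c`, bypassing the vertices they
share. Every edge of the resulting path is an edge of the prefix or departs at time `t` or later,
and the only edge of the prefix entering `C` is its last one, which arrives at time `t`. So the
first point of contact is entered no earlier than time `t - 1` and the response time is at most
`ea(c, DA, [t, tω]) - t`.
-/

/-- A temporal `(s,d)`-path within the time interval `[tα, tω]` in a temporal directed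
graph on vertex type `V` with time-indexed edge relation `E`: a sequence of pairwise
distinct vertices `v 0 = s, …, v k = d` together with strictly increasing departure
times `t 1 < ⋯ < t k` (here `t i` is the time of the edge from `v i` to `v (i+1)`),
each edge present at its departure time, all departure times `≥ tα`, and arrival
`t k + 1 ≤ tω`.  The empty path (`k = 0`) requires `s = d`. -/
structure TPath (V : Type*) (E : ℕ → V → V → Prop) (s d : V) (tα tω : ℕ) where
  k : ℕ
  v : Fin (k + 1) → V
  t : Fin k → ℕ
  hv0 : v 0 = s
  hvk : v (Fin.last k) = d
  inj : Function.Injective v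
  mono : StrictMono t
  hedge : ∀ i : Fin k, E (t i) (v i.castSucc) (v i.succ)
  hstart : ∀ i : Fin k, tα ≤ t i
  hend : ∀ i : Fin k, t i + 1 ≤ tω

namespace TPath

variable {V : Type*} {E : ℕ → V → V → Prop} {s d : V} {tα tω : ℕ}

/-- Ending (arrival) time of a temporal path: `t k + 1`; the empty path arrives at `tα`. -/
def endTime (π : TPath V E s d tα tω) : ℕ :=
  if h : 0 < π.k then π.t ⟨π.k - 1, by omega⟩ + 1 else tα

/-- `x` is the index of the first point of contact of the path `π` with the decoy set `C`:
`π.v x ∈ C`, and `x` is the least such index. -/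
def hitsAt (π : TPath V E s d tα tω) (C : Set V) (x : Fin (π.k + 1)) : Prop :=
  π.v x ∈ C ∧ ∀ j : Fin (π.k + 1), π.v j ∈ C → x ≤ j

/-- Index of the first vertex of `π` lying in `C` (`sInf ∅ = 0` if there is none). -/
noncomputable def firstContact (π : TPath V E s d tα tω) (C : Set V) : ℕ :=
  sInf {i : ℕ | ∃ h : i < π.k + 1, π.v ⟨i, h⟩ ∈ C}

/-- Response time `RT(π, C) = t k − t x` where `v x` is the first point of contact of `π`
with `C` (entered via the edge with time `t x`); junk value `0` if `π` does not meet `C`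
properly. -/
noncomputable def RT (π : TPath V E s d tα tω) (C : Set V) : ℕ :=
  if h : 0 < π.firstContact C ∧ π.firstContact C ≤ π.k ∧ 0 < π.k then
    π.t ⟨π.k - 1, by omega⟩ - π.t ⟨π.firstContact C - 1, by omega⟩
  else 0

end TPath

/-- Earliest arrival time from the source set `S` to `x` within `[tα, tω]`
(`⊤ = ∞` if unreachable; it is `tα` for `x ∈ S`, realized by the empty path). -/
noncomputable def ea {V : Type*} (E : ℕ → V → V → Prop) (S : Set V) (tα tω : ℕ)
    (x : V) : ℕ∞ :=
  sInf {n : ℕ∞ | ∃ s ∈ S, ∃ π : TPath V E s x tα tω, n = (π.endTime : ℕ∞)}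

/-- `C` is a temporal `(S,d)`-cut within `[tα, tω]`: every temporal `(s,d)`-path within
`[tα, tω]` with `s ∈ S` contains a vertex of `C`. -/
def IsTemporalCut {V : Type*} (E : ℕ → V → V → Prop) (S : Set V) (d : V) (tα tω : ℕ)
    (C : Set V) : Prop :=
  ∀ s ∈ S, ∀ π : TPath V E s d tα tω, ∃ i, π.v i ∈ C

section EarliestArrival

variable {V : Type*} {E : ℕ → V → V → Prop} {S : Set V} {s d : V} {tα tω : ℕ}

theorem ea_le_endTime (π : TPath V E s d tα tω) (hs : s ∈ S) : ea E S tα tω d ≤ π.endTime :=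
  sInf_le ⟨s, hs, π, rfl⟩

theorem exists_endTime_eq_ea (h : ea E S tα tω d ≠ ⊤) :
    ∃ s ∈ S, ∃ π : TPath V E s d tα tω, (π.endTime : ℕ∞) = ea E S tα tω d := by
  have hne : {n : ℕ∞ | ∃ s ∈ S, ∃ π : TPath V E s d tα tω, n = π.endTime}.Nonempty :=
    Set.nonempty_iff_ne_empty.mpr fun he => h (by rw [ea, he, sInf_empty])
  obtain ⟨s, hs, π, hπ⟩ := csInf_mem hne
  exact ⟨s, hs, π, hπ.symm⟩

end EarliestArrival

namespace TPath

variable {V : Type*} {E : ℕ → V → V → Prop} {s c d : V} {tα tβ tω : ℕ} {C : Set V}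

theorem v_congr (π : TPath V E s d tα tω) {a b : Fin (π.k + 1)} (h : a.1 = b.1) :
    π.v a = π.v b :=
  congrArg π.v (Fin.ext h)

theorem t_congr (π : TPath V E s d tα tω) {a b : Fin π.k} (h : a.1 = b.1) :
    π.t a = π.t b :=
  congrArg π.t (Fin.ext h)

def edges (π : TPath V E s d tα tω) : Set (ℕ × V × V) :=
  Set.range fun i : Fin π.k => (π.t i, π.v i.castSucc, π.v i.succ)

theorem endTime_eq (π : TPath V E s d tα tω) (hk : 0 < π.k) :
    π.endTime = π.t ⟨π.k - 1, by omega⟩ + 1 :=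
  dif_pos hk

theorem t_lt_endTime (π : TPath V E s d tα tω) (i : Fin π.k) : π.t i < π.endTime := by
  rw [π.endTime_eq (by have := i.2; omega)]
  exact Nat.lt_succ_of_le (π.mono.monotone (Fin.mk_le_mk.mpr (by have := i.2; omega)))

theorem le_endTime (π : TPath V E s d tα tω) : tα ≤ π.endTime := by
  unfold endTime
  split_ifs
  · exact (π.hstart _).trans (Nat.le_succ _)
  · exact le_rfl

theorem endTime_le_iff (π : TPath V E s d tα tω) {T : ℕ} :
    π.endTime ≤ T ↔ tα ≤ T ∧ ∀ e ∈ π.edges, e.1 < T := by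
  refine ⟨fun h => ⟨π.le_endTime.trans h, ?_⟩, fun ⟨hα, ht⟩ => ?_⟩
  · rintro _ ⟨i, rfl⟩
    exact (π.t_lt_endTime i).trans_le h
  · unfold endTime
    split_ifs
    · exact ht _ ⟨_, rfl⟩
    · exact hα

theorem endTime_le (π : TPath V E s d tα tω) (hk : 0 < π.k) : π.endTime ≤ tω := by
  rw [π.endTime_eq hk]
  exact π.hend _

def copy (π : TPath V E s d tα tω) {s' d' : V} (hs : s = s') (hd : d = d') :
    TPath V E s' d' tα tω :=
  { π with hv0 := hs ▸ π.hv0, hvk := hd ▸ π.hvk }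

def take (π : TPath V E s d tα tω) (m : Fin (π.k + 1)) : TPath V E s (π.v m) tα tω where
  k := m
  v i := π.v (Fin.castLE m.2 i)
  t i := π.t (Fin.castLE (Nat.lt_succ_iff.mp m.2) i)
  hv0 := (π.v_congr (by simp)).trans π.hv0
  hvk := rfl
  inj := π.inj.comp (Fin.castLE_injective _)
  mono := π.mono.comp (Fin.strictMono_castLE _)
  hedge i := π.hedge _
  hstart i := π.hstart _
  hend i := π.hend _

def drop (π : TPath V E s d tα tω) (m : Fin (π.k + 1))
    (ht : ∀ i : Fin π.k, m.1 ≤ i.1 → tβ ≤ π.t i) : TPath V E (π.v m) d tβ tω where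
  k := π.k - m
  v i := π.v ⟨m + i, by omega⟩
  t i := π.t ⟨m + i, by omega⟩
  hv0 := rfl
  hvk := (π.v_congr (by simp; omega)).trans π.hvk
  inj a b h := Fin.ext (by have := congrArg Fin.val (π.inj h); simp at this; omega)
  mono a b h := π.mono (Fin.mk_lt_mk.mpr (by have : a.1 < b.1 := h; omega))
  hedge i := π.hedge ⟨m + i, by omega⟩
  hstart i := ht _ (Nat.le_add_right _ _)
  hend i := π.hend _

theorem edges_take_subset (π : TPath V E s d tα tω) (m : Fin (π.k + 1)) :
    (π.take m).edges ⊆ π.edges := by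
  rintro _ ⟨i, rfl⟩
  exact ⟨Fin.castLE (Nat.lt_succ_iff.mp m.2) i, rfl⟩

theorem edges_drop_subset (π : TPath V E s d tα tω) (m : Fin (π.k + 1))
    (ht : ∀ i : Fin π.k, m.1 ≤ i.1 → tβ ≤ π.t i) : (π.drop m ht).edges ⊆ π.edges := by
  rintro _ ⟨i, rfl⟩
  exact ⟨⟨m + i, by have : i.1 < π.k - m := i.2; omega⟩, rfl⟩

theorem endTime_take (π : TPath V E s d tα tω) (m : Fin (π.k + 1)) (hm : 0 < m.1) :
    (π.take m).endTime = π.t ⟨m - 1, by omega⟩ + 1 :=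
  dif_pos hm

theorem endTime_drop (π : TPath V E s d tα tω) (m : Fin (π.k + 1))
    (ht : ∀ i : Fin π.k, m.1 ≤ i.1 → tβ ≤ π.t i) (hm : m.1 < π.k) :
    (π.drop m ht).endTime = π.endTime := by
  rw [endTime_eq _ (by simp only [drop]; omega), π.endTime_eq (by omega)]
  exact congrArg (· + 1) (π.t_congr (by simp only [drop]; omega))

def append (π₁ : TPath V E s c tα tω) (π₂ : TPath V E c d tβ tω) (h : π₁.endTime ≤ tβ)
    (hdisj : ∀ i j, π₁.v i = π₂.v j → i = Fin.last π₁.k ∧ j = 0) : TPath V E s d tα tω where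
  k := π₁.k + π₂.k
  v i := if hi : i.1 ≤ π₁.k then π₁.v ⟨i, by omega⟩ else π₂.v ⟨i - π₁.k, by omega⟩
  t i := if hi : i.1 < π₁.k then π₁.t ⟨i, hi⟩ else π₂.t ⟨i - π₁.k, by omega⟩
  hv0 := by
    simp only [Fin.val_zero, Nat.zero_le]
    exact (π₁.v_congr (by simp)).trans π₁.hv0
  hvk := by
    simp only [Fin.val_last]
    split_ifs
    · exact (π₁.v_congr (by simp; omega)).trans <| π₁.hvk.trans <| π₂.hv0.symm.trans <|
        (π₂.v_congr (by simp; omega)).trans π₂.hvk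
    · exact (π₂.v_congr (by simp)).trans π₂.hvk
  inj a b hab := by
    beta_reduce at hab
    split_ifs at hab
    · simpa [Fin.ext_iff] using π₁.inj hab
    · have := (hdisj _ _ hab).2; simp [Fin.ext_iff] at this; omega
    · have := (hdisj _ _ hab.symm).2; simp [Fin.ext_iff] at this; omega
    · have := congrArg Fin.val (π₂.inj hab); simp at this; omega
  mono a b hab := by
    have hab : a.1 < b.1 := hab
    beta_reduce
    split_ifs
    · exact π₁.mono (Fin.mk_lt_mk.mpr hab)
    · exact ((π₁.t_lt_endTime _).trans_le h).trans_le (π₂.hstart _)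
    · omega
    · exact π₂.mono (Fin.mk_lt_mk.mpr (by omega))
  hedge i := by
    have hi : i.castSucc.1 = i.1 := rfl
    have hi' : i.succ.1 = i.1 + 1 := rfl
    split_ifs <;> try omega
    · exact π₁.hedge ⟨i, by omega⟩
    all_goals
      refine (congrArg₂ (E _) ?_ ?_).mpr (π₂.hedge ⟨i - π₁.k, by omega⟩)
    · exact (π₁.v_congr (by simp; omega)).trans <| π₁.hvk.trans <| π₂.hv0.symm.trans <|
        π₂.v_congr (by simp; omega)
    all_goals exact π₂.v_congr (by simp <;> omega)
  hstart i := by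
    split_ifs
    · exact π₁.hstart _
    · exact (π₁.le_endTime.trans h).trans (π₂.hstart _)
  hend i := by
    split_ifs
    · exact π₁.hend _
    · exact π₂.hend _

section append

variable (π₁ : TPath V E s c tα tω) (π₂ : TPath V E c d tβ tω) (h : π₁.endTime ≤ tβ)
  (hdisj : ∀ i j, π₁.v i = π₂.v j → i = Fin.last π₁.k ∧ j = 0)

theorem append_v_of_le (i : Fin (π₁.k + π₂.k + 1)) (hi : i.1 ≤ π₁.k) :
    (π₁.append π₂ h hdisj).v i = π₁.v ⟨i, by omega⟩ :=
  dif_pos hi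

theorem append_v_of_ge (i : Fin (π₁.k + π₂.k + 1)) (hi : π₁.k ≤ i.1) :
    (π₁.append π₂ h hdisj).v i = π₂.v ⟨i - π₁.k, by omega⟩ := by
  by_cases hik : i.1 ≤ π₁.k
  · rw [append_v_of_le _ _ _ _ _ hik]
    exact (π₁.v_congr (by simp; omega)).trans <| π₁.hvk.trans <| π₂.hv0.symm.trans <|
      π₂.v_congr (by simp; omega)
  · exact dif_neg hik

theorem append_t_of_lt (i : Fin (π₁.k + π₂.k)) (hi : i.1 < π₁.k) :
    (π₁.append π₂ h hdisj).t i = π₁.t ⟨i, hi⟩ :=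
  dif_pos hi

theorem append_t_of_ge (i : Fin (π₁.k + π₂.k)) (hi : π₁.k ≤ i.1) :
    (π₁.append π₂ h hdisj).t i = π₂.t ⟨i - π₁.k, by omega⟩ :=
  dif_neg (by omega)

theorem edges_append_subset : (π₁.append π₂ h hdisj).edges ⊆ π₁.edges ∪ π₂.edges := by
  rintro _ ⟨i, rfl⟩
  have hi : i.1 < π₁.k + π₂.k := i.2
  beta_reduce
  rcases lt_or_ge i.1 π₁.k with hik | hik
  · refine Or.inl ⟨⟨i, hik⟩, ?_⟩
    rw [append_t_of_lt _ _ _ _ _ hik, append_v_of_le _ _ _ _ i.castSucc (by simp; omega),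
      append_v_of_le _ _ _ _ i.succ (by simp; omega)]
    rfl
  · refine Or.inr ⟨⟨i - π₁.k, by omega⟩, ?_⟩
    rw [append_t_of_ge _ _ _ _ _ hik, append_v_of_ge _ _ _ _ i.castSucc (by simp; omega),
      append_v_of_ge _ _ _ _ i.succ (by simp; omega)]
    exact Prod.ext rfl (Prod.ext rfl (π₂.v_congr (by simp; omega)))

end append

/-- Cut `π₂` at its last vertex lying on `π₁` and glue it to the prefix of `π₁` ending there. -/
theorem exists_bypass (π₁ : TPath V E s c tα tω) (π₂ : TPath V E c d tβ tω)
    (h : π₁.endTime ≤ tβ) :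
    ∃ π : TPath V E s d tα tω, π.endTime ≤ π₂.endTime ∧ π.edges ⊆ π₁.edges ∪ π₂.edges := by
  classical
  obtain ⟨j, hj, hj_max⟩ := (Finset.univ.filter fun j => π₂.v j ∈ Set.range π₁.v).exists_max_image
    id ⟨0, by simpa using ⟨Fin.last _, π₁.hvk.trans π₂.hv0.symm⟩⟩
  obtain ⟨i, hi⟩ := (Finset.mem_filter.mp hj).2
  set π₁' := (π₁.take i).copy rfl hi
  set π₂' := π₂.drop j fun _ _ => π₂.hstart _
  have hk₂ : π₂'.k = π₂.k - j := rfl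
  have hsub : π₁'.edges ∪ π₂'.edges ⊆ π₁.edges ∪ π₂.edges :=
    Set.union_subset_union (π₁.edges_take_subset i) (π₂.edges_drop_subset j _)
  have h' : π₁'.endTime ≤ tβ := by
    obtain ⟨hα, hlt⟩ := π₁.endTime_le_iff.mp h
    exact π₁'.endTime_le_iff.mpr ⟨hα, fun e he => hlt e (π₁.edges_take_subset i he)⟩
  have hdisj : ∀ a b, π₁'.v a = π₂'.v b → a = Fin.last π₁'.k ∧ b = 0 := by
    intro a b hab
    have hb : j.1 + b.1 ≤ j.1 :=
      hj_max ⟨j + b, by have := b.2; omega⟩ (by simpa using ⟨_, hab⟩)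
    have hb0 : b = 0 := Fin.ext (by simp only [Fin.val_zero]; omega)
    subst hb0
    have hai := congrArg Fin.val (π₁.inj (hab.trans hi.symm))
    exact ⟨Fin.ext hai, rfl⟩
  have hedges := (edges_append_subset π₁' π₂' h' hdisj).trans hsub
  refine ⟨π₁'.append π₂' h' hdisj, (endTime_le_iff _).mpr ⟨?_, fun e he => ?_⟩, hedges⟩
  · exact (π₁.le_endTime.trans h).trans π₂.le_endTime
  · rcases hedges he with he | he
    · exact ((π₁.endTime_le_iff.mp h).2 e he).trans_le π₂.le_endTime
    · exact (π₂.endTime_le_iff.mp le_rfl).2 e he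

theorem exists_hitsAt (π : TPath V E s d tα tω) (h : ∃ i, π.v i ∈ C) : ∃ x, π.hitsAt C x := by
  classical
  obtain ⟨x, hx, hmin⟩ := (Finset.univ.filter fun i => π.v i ∈ C).exists_min_image id
    (by simpa [Finset.filter_nonempty_iff] using h)
  exact ⟨x, (Finset.mem_filter.mp hx).2, fun j hj => hmin j (by simpa using hj)⟩

theorem firstContact_eq (π : TPath V E s d tα tω) {x : Fin (π.k + 1)} (h : π.hitsAt C x) :
    π.firstContact C = x :=
  le_antisymm (Nat.sInf_le ⟨x.2, h.1⟩)
    (le_csInf ⟨x, x.2, h.1⟩ fun _ ⟨hn, hnC⟩ => h.2 ⟨_, hn⟩ hnC)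

theorem RT_eq_t_sub (π : TPath V E s d tα tω) {x : Fin (π.k + 1)} (h : π.hitsAt C x)
    (hx : 0 < x.1) : π.RT C = π.t ⟨π.k - 1, by omega⟩ - π.t ⟨x - 1, by omega⟩ := by
  have hfc := π.firstContact_eq h
  rw [RT, dif_pos (by omega)]
  exact congrArg _ (π.t_congr (by simp [hfc]))

theorem RT_eq (π : TPath V E s d tα tω) {x : Fin (π.k + 1)} (h : π.hitsAt C x)
    (hx : 0 < x.1) : π.RT C = π.endTime - (π.take x).endTime := by
  rw [π.RT_eq_t_sub h hx, π.endTime_eq (by omega), π.endTime_take x hx]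
  omega

theorem RT_le (π : TPath V E s d tα tω) {T : ℕ}
    (hT : ∀ e ∈ π.edges, e.2.2 ∈ C → T ≤ e.1 + 1) : π.RT C ≤ π.endTime - T := by
  by_cases hfc : 0 < π.firstContact C ∧ π.firstContact C ≤ π.k ∧ 0 < π.k
  · obtain ⟨i, hi, hiC⟩ := Nat.nonempty_of_pos_sInf hfc.1
    obtain ⟨x, hx⟩ := π.exists_hitsAt ⟨⟨i, hi⟩, hiC⟩
    have hx0 : 0 < x.1 := π.firstContact_eq hx ▸ hfc.1
    have hsucc : (⟨x - 1, by omega⟩ : Fin π.k).succ = x := Fin.ext (by simp; omega)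
    have := hT _ ⟨⟨x - 1, by omega⟩, rfl⟩ (by simpa [hsucc] using hx.1)
    simp only at this
    rw [π.RT_eq_t_sub hx hx0, π.endTime_eq hfc.2.2]
    omega
  · rw [RT, dif_neg hfc]
    exact Nat.zero_le _

theorem exists_prefix_ea_sub_le_RT (π : TPath V E s d tα tω) (hs : s ∉ C) (hd : d ∉ C)
    (hC : ∃ i, π.v i ∈ C) :
    ∃ c ∈ C, ∃ π₁ : TPath V E s c tα tω, 0 < π₁.k ∧ (∀ i, π₁.v i ∈ C → π₁.v i = c) ∧
      ea E {c} π₁.endTime tω d - π₁.endTime ≤ (π.RT C : ℕ∞) := by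
  obtain ⟨x, hx⟩ := π.exists_hitsAt hC
  have hx0 : 0 < x.1 := by
    refine Nat.pos_of_ne_zero fun h0 => hs ?_
    rw [← π.hv0, π.v_congr (b := x) (by simp [h0])]
    exact hx.1
  have hxk : x.1 < π.k := by
    refine lt_of_le_of_ne (Nat.lt_succ_iff.mp x.2) fun hk => hd ?_
    rw [← π.hvk, π.v_congr (b := x) (by simp [hk])]
    exact hx.1
  have hafter : ∀ i : Fin π.k, x.1 ≤ i.1 → (π.take x).endTime ≤ π.t i := by
    intro i hi
    rw [π.endTime_take x hx0]
    exact π.mono (Fin.mk_lt_mk.mpr (by omega))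
  refine ⟨π.v x, hx.1, π.take x, hx0, fun i hi => π.v_congr ?_, ?_⟩
  · exact le_antisymm (Nat.lt_succ_iff.mp i.2) (hx.2 _ hi)
  · calc ea E {π.v x} (π.take x).endTime tω d - (π.take x).endTime
        ≤ ((π.drop x hafter).endTime : ℕ∞) - (π.take x).endTime :=
          tsub_le_tsub_right (ea_le_endTime _ (Set.mem_singleton _)) _
      _ = (π.RT C : ℕ∞) := by
          rw [π.endTime_drop x hafter hxk, π.RT_eq hx hx0, ENat.natCast_sub]

theorem exists_RT_le_endTime_sub (π₁ : TPath V E s c tα tω) (hπ₁ : ∀ i, π₁.v i ∈ C → π₁.v i = c)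
    (π₂ : TPath V E c d π₁.endTime tω) :
    ∃ π : TPath V E s d tα tω, π.RT C ≤ π₂.endTime - π₁.endTime := by
  obtain ⟨π, hend, hedges⟩ := π₁.exists_bypass π₂ le_rfl
  refine ⟨π, (π.RT_le fun e he heC => ?_).trans (Nat.sub_le_sub_right hend _)⟩
  rcases hedges he with ⟨i, rfl⟩ | ⟨j, rfl⟩
  · have hlast : i.succ = Fin.last π₁.k := π₁.inj ((hπ₁ _ heC).trans π₁.hvk.symm)
    have hi : i.1 = π₁.k - 1 := by have := congrArg Fin.val hlast; simp at this; omega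
    rw [π₁.endTime_eq (by omega)]
    exact (congrArg (· + 1) (π₁.t_congr (b := i) hi.symm)).le
  · exact (π₂.hstart j).trans (Nat.le_succ _)

end TPath

theorem optimal_attack_via_first_contacts_general {V : Type*}
    (E : ℕ → V → V → Prop) (S : Set V) (DA : V) (tα tω : ℕ) (C : Set V)
    (hC : C ⊆ (S ∪ {DA})ᶜ)
    (hcut : IsTemporalCut E S DA tα tω C) :
    sInf {n : ℕ∞ | ∃ s ∈ S, ∃ π : TPath V E s DA tα tω, n = (π.RT C : ℕ∞)} =
    sInf {n : ℕ∞ | ∃ c ∈ C, ∃ t : ℕ, tα ≤ t ∧ t ≤ tω ∧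
      (∃ s ∈ S, ∃ π : TPath V E s c tα tω,
        π.endTime = t ∧ ∀ i, π.v i ∈ C → π.v i = c) ∧
      n = ea E {c} t tω DA - (t : ℕ∞)} := by
  apply le_antisymm
  · refine le_sInf ?_
    rintro _ ⟨c, -, t, -, -, ⟨s, hs, π₁, rfl, hπ₁⟩, rfl⟩
    by_cases htop : ea E {c} π₁.endTime tω DA = ⊤
    · rw [htop, ENat.top_sub_natCast]
      exact le_top
    obtain ⟨_, rfl, π₂, hπ₂⟩ := exists_endTime_eq_ea htop
    obtain ⟨π, hπ⟩ := π₁.exists_RT_le_endTime_sub hπ₁ π₂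
    refine le_trans (sInf_le ⟨s, hs, π, rfl⟩) ?_
    calc (π.RT C : ℕ∞) ≤ ((π₂.endTime - π₁.endTime : ℕ) : ℕ∞) := by exact_mod_cast hπ
      _ = _ := by rw [ENat.natCast_sub, hπ₂]
  · refine le_sInf ?_
    rintro _ ⟨s, hs, π, rfl⟩
    obtain ⟨c, hc, π₁, hk, hπ₁, hle⟩ := π.exists_prefix_ea_sub_le_RT
      (fun h => hC h (Or.inl hs)) (fun h => hC h (Or.inr rfl)) (hcut s hs π)
    refine le_trans (sInf_le ?_) hle
    exact ⟨c, hc, π₁.endTime, π₁.le_endTime, π₁.endTime_le hk, ⟨s, hs, π₁, rfl, hπ₁⟩, rfl⟩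

/-- correctness of Algorithm 1: for a temporal `(S,DA)`-cut
`C ⊆ V \ (S ∪ {DA})`, assuming some temporal `(s,DA)`-path with `s ∈ S` exists, the
minimum response time over all attack paths equals the minimum, over pairs `(c, t)` with
`c ∈ C`, `tα ≤ t ≤ tω` such that some temporal path from a source `s ∈ S` arrives at `c`
at time `t` while containing no vertex of `C \ {c}`, of `ea(c, DA, [t, tω]) − t`. -/
theorem optimal_attack_via_first_contacts {V : Type*} [Fintype V]
    (E : ℕ → V → V → Prop) (S : Set V) (DA : V) (tα tω : ℕ) (C : Set V)
    (hC : C ⊆ (S ∪ {DA})ᶜ)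
    (hcut : IsTemporalCut E S DA tα tω C)
    (hex : ∃ s ∈ S, Nonempty (TPath V E s DA tα tω)) :
    sInf {n : ℕ∞ | ∃ s ∈ S, ∃ π : TPath V E s DA tα tω, n = (π.RT C : ℕ∞)} =
    sInf {n : ℕ∞ | ∃ c ∈ C, ∃ t : ℕ, tα ≤ t ∧ t ≤ tω ∧
      (∃ s ∈ S, ∃ π : TPath V E s c tα tω,
        π.endTime = t ∧ ∀ i, π.v i ∈ C → π.v i = c) ∧
      n = ea E {c} t tω DA - (t : ℕ∞)} :=
  optimal_attack_via_first_contacts_general E S DA tα tω C hC hcut
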